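/- arXiv:2212.00511 — 4 statements merged into one kernel-verified Lean document; each statement's English description precedes it below -/
import Mathlib

section
/- (Cocycle identity for κ.) Let L ≤ G × H × T, M ≤ H × K × T, N ≤ K × I × T be subgroups of products of finite groups. Then |k₂(L) ∩ k₁(M)| · |k₂(L ∗ M) ∩ k₁(N)| · |K| = |k₂(L) ∩ k₁(M ∗ N)| · |k₂(M) ∩ k₁(N)| · |K|, equivalently (|k₂(L) ∩ k₁(M)|/|H|)·(|k₂(L∗M) ∩ k₁(N)|/|K|) = (|k₂(L) ∩ k₁(M∗N)|/|K|)·(|k₂(M) ∩ k₁(N)|/|H|) as rational numbers. In fact there is a group isomorphism (k₂(L) ∩ k₁(M ∗ N))/(k₂(L) ∩ k₁(M)) ≅ (k₂(L ∗ M) ∩ k₁(N))/(k₂(M) ∩ k₁(N)). -/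
/-! Put `P = {(h, k) | (h, k, 1) ∈ M, h ∈ k₂(L), k ∈ k₁(N)} ≤ H × K`. Its two projections are
`k₂(L) ∩ k₁(M ∗ N)` and `k₂(L ∗ M) ∩ k₁(N)`, and its two kernels `{h | (h, 1) ∈ P}`,
`{k | (1, k) ∈ P}` are `k₂(L) ∩ k₁(M)` and `k₂(M) ∩ k₁(N)`. For any subgroup `P ≤ H × K` and
`(h, k) ∈ P` one has `(h, 1) ∈ P ↔ (1, k) ∈ P`, so both coset spaces of projection modulo kernel
are the quotient of `P` by one and the same relation (Goursat). -/

section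
variable {A B C : Type*} [Group A] [Group B] [Group C]

/-- `k₁(D) = {a | (a, 1, 1) ∈ D}`. -/
def k1 (D : Subgroup (A × B × C)) : Subgroup A where
  carrier := {a | ((a, 1, 1) : A × B × C) ∈ D}
  one_mem' := D.one_mem
  mul_mem' := fun {a b} ha hb => by simpa using D.mul_mem ha hb
  inv_mem' := fun {a} ha => by simpa using D.inv_mem ha

/-- `k₂(D) = {b | (1, b, 1) ∈ D}`. -/
def k2 (D : Subgroup (A × B × C)) : Subgroup B where
  carrier := {b | ((1, b, 1) : A × B × C) ∈ D}
  one_mem' := D.one_mem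
  mul_mem' := fun {a b} ha hb => by simpa using D.mul_mem ha hb
  inv_mem' := fun {a} ha => by simpa using D.inv_mem ha

end

/-- The star product of subgroups `D ≤ G × H × T` and `E ≤ H × K × T`. -/
def star3 {G H K T : Type*} [Group G] [Group H] [Group K] [Group T]
    (D : Subgroup (G × H × T)) (E : Subgroup (H × K × T)) : Subgroup (G × K × T) where
  carrier := {x | ∃ h : H, ((x.1, h, x.2.2) : G × H × T) ∈ D ∧ ((h, x.2.1, x.2.2) : H × K × T) ∈ E}
  one_mem' := ⟨1, D.one_mem, E.one_mem⟩
  mul_mem' := fun ⟨h₁, hD₁, hE₁⟩ ⟨h₂, hD₂, hE₂⟩ =>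
    ⟨h₁ * h₂, D.mul_mem hD₁ hD₂, E.mul_mem hE₁ hE₂⟩
  inv_mem' := fun ⟨h, hD, hE⟩ => ⟨h⁻¹, D.inv_mem hD, E.inv_mem hE⟩

noncomputable def Equiv.ofSurjectiveOfEqIffEq {P α β : Type*} {a : P → α} {b : P → β}
    (ha : Function.Surjective a) (hb : Function.Surjective b)
    (hab : ∀ p q, a p = a q ↔ b p = b q) : α ≃ β :=
  (Setoid.quotientKerEquivOfSurjective a ha).symm.trans
    ((Quotient.congrRight hab).trans (Setoid.quotientKerEquivOfSurjective b hb))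

namespace Subgroup

theorem card_mul_relIndex {G : Type*} [Group G] {S X : Subgroup G} (h : S ≤ X) :
    Nat.card S * S.relIndex X = Nat.card X := by
  rw [← relIndex_bot_left, ← relIndex_bot_left]
  exact relIndex_mul_relIndex _ _ _ bot_le h

variable {H K : Type*} [Group H] [Group K] (P : Subgroup (H × K))

theorem mk_one_mem_iff_one_mk_mem {x : H × K} (hx : x ∈ P) : (x.1, 1) ∈ P ↔ (1, x.2) ∈ P := by
  have hsplit : ((1 : H), x.2) = (x.1, (1 : K))⁻¹ * x := by ext <;> simp
  rw [hsplit, mul_mem_cancel_right hx, inv_mem_iff]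

theorem goursatFst_le_map_fst : P.goursatFst ≤ P.map (MonoidHom.fst H K) :=
  fun h hh => ⟨(h, 1), mem_goursatFst.1 hh, rfl⟩

theorem goursatSnd_le_map_snd : P.goursatSnd ≤ P.map (MonoidHom.snd H K) :=
  fun k hk => ⟨(1, k), mem_goursatSnd.1 hk, rfl⟩

/-- Both coset spaces are the quotient of `P` by `P ∩ (goursatFst P × goursatSnd P)`. -/
noncomputable def goursatQuotientEquiv :
    P.map (MonoidHom.fst H K) ⧸ P.goursatFst.subgroupOf (P.map (MonoidHom.fst H K)) ≃
      P.map (MonoidHom.snd H K) ⧸ P.goursatSnd.subgroupOf (P.map (MonoidHom.snd H K)) :=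
  Equiv.ofSurjectiveOfEqIffEq
    (a := fun p : P => ((⟨p.1.1, mem_map_of_mem _ p.2⟩ : P.map (MonoidHom.fst H K)) : _ ⧸ _))
    (b := fun p : P => ((⟨p.1.2, mem_map_of_mem _ p.2⟩ : P.map (MonoidHom.snd H K)) : _ ⧸ _))
    (by
      rintro ⟨_, p, hp, rfl⟩
      exact ⟨⟨p, hp⟩, rfl⟩)
    (by
      rintro ⟨_, p, hp, rfl⟩
      exact ⟨⟨p, hp⟩, rfl⟩)
    (fun p q => by
      simpa [QuotientGroup.eq, mem_subgroupOf] using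
        P.mk_one_mem_iff_one_mk_mem (P.mul_mem (P.inv_mem p.2) q.2))

theorem card_goursatFst_mul_card_map_snd :
    Nat.card P.goursatFst * Nat.card (P.map (MonoidHom.snd H K)) =
      Nat.card (P.map (MonoidHom.fst H K)) * Nat.card P.goursatSnd := by
  rw [← card_mul_relIndex P.goursatFst_le_map_fst, ← card_mul_relIndex P.goursatSnd_le_map_snd,
    relIndex, relIndex, index, index, Nat.card_congr P.goursatQuotientEquiv]
  ring

end Subgroup

section Kappa

variable {G H K I T : Type*} [Group G] [Group H] [Group K] [Group I] [Group T]

def fiberOne (M : Subgroup (H × K × T)) : Subgroup (H × K) :=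
  M.comap ((MonoidHom.id H).prodMap (MonoidHom.inl K T))

theorem mem_fiberOne {M : Subgroup (H × K × T)} {x : H × K} :
    x ∈ fiberOne M ↔ (x.1, x.2, 1) ∈ M :=
  Iff.rfl

theorem goursatFst_fiberOne_inf_prod (M : Subgroup (H × K × T)) (A : Subgroup H)
    (B : Subgroup K) : (fiberOne M ⊓ A.prod B).goursatFst = A ⊓ k1 M := by
  ext h
  simp [mem_fiberOne, Subgroup.mem_prod, k1, and_comm]

theorem goursatSnd_fiberOne_inf_prod (M : Subgroup (H × K × T)) (A : Subgroup H)
    (B : Subgroup K) : (fiberOne M ⊓ A.prod B).goursatSnd = k2 M ⊓ B := by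
  ext k
  simp [mem_fiberOne, Subgroup.mem_prod, k2]

theorem map_fst_fiberOne_inf_prod (M : Subgroup (H × K × T)) (N : Subgroup (K × I × T))
    (A : Subgroup H) :
    (fiberOne M ⊓ A.prod (k1 N)).map (MonoidHom.fst H K) = A ⊓ k1 (star3 M N) := by
  ext h
  simp only [Subgroup.mem_map, Subgroup.mem_inf, mem_fiberOne, Subgroup.mem_prod, Prod.exists,
    MonoidHom.coe_fst, exists_and_right, exists_eq_right]
  exact ⟨fun ⟨k, hM, hA, hN⟩ => ⟨hA, k, hM, hN⟩, fun ⟨hA, k, hM, hN⟩ => ⟨k, hM, hA, hN⟩⟩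

theorem map_snd_fiberOne_inf_prod (L : Subgroup (G × H × T)) (M : Subgroup (H × K × T))
    (B : Subgroup K) :
    (fiberOne M ⊓ (k2 L).prod B).map (MonoidHom.snd H K) = k2 (star3 L M) ⊓ B := by
  ext k
  simp only [Subgroup.mem_map, Subgroup.mem_inf, mem_fiberOne, Subgroup.mem_prod, Prod.exists,
    MonoidHom.coe_snd, exists_eq_right]
  exact ⟨fun ⟨h, hM, hL, hB⟩ => ⟨⟨h, hL, hM⟩, hB⟩, fun ⟨⟨h, hL, hM⟩, hB⟩ => ⟨h, hM, hL, hB⟩⟩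

end Kappa

theorem kappa_cocycle_general {G H K I T : Type*} [Group G] [Group H] [Group K] [Group I] [Group T]
    (L : Subgroup (G × H × T)) (M : Subgroup (H × K × T)) (N : Subgroup (K × I × T)) :
    Nat.card ↥(k2 L ⊓ k1 M) * Nat.card ↥(k2 (star3 L M) ⊓ k1 N) * Nat.card K =
      Nat.card ↥(k2 L ⊓ k1 (star3 M N)) * Nat.card ↥(k2 M ⊓ k1 N) * Nat.card K ∧
    Nonempty
      ((↥(k2 L ⊓ k1 (star3 M N)) ⧸ (k2 L ⊓ k1 M).subgroupOf (k2 L ⊓ k1 (star3 M N))) ≃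
       (↥(k2 (star3 L M) ⊓ k1 N) ⧸ (k2 M ⊓ k1 N).subgroupOf (k2 (star3 L M) ⊓ k1 N))) := by
  have hcard := (fiberOne M ⊓ (k2 L).prod (k1 N)).card_goursatFst_mul_card_map_snd
  have e := (fiberOne M ⊓ (k2 L).prod (k1 N)).goursatQuotientEquiv
  rw [goursatFst_fiberOne_inf_prod, goursatSnd_fiberOne_inf_prod, map_fst_fiberOne_inf_prod,
    map_snd_fiberOne_inf_prod] at hcard e
  exact ⟨congrArg (· * Nat.card K) hcard, ⟨e⟩⟩

/-- Cocycle identity for `κ`: for subgroups `L ≤ G × H × T`, `M ≤ H × K × T`, `N ≤ K × I × T`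
of products of finite groups,
`|k₂(L) ∩ k₁(M)| · |k₂(L ∗ M) ∩ k₁(N)| · |K| = |k₂(L) ∩ k₁(M ∗ N)| · |k₂(M) ∩ k₁(N)| · |K|`,
and in fact there is a bijection between the corresponding coset quotients
`(k₂(L) ∩ k₁(M ∗ N))/(k₂(L) ∩ k₁(M))` and `(k₂(L ∗ M) ∩ k₁(N))/(k₂(M) ∩ k₁(N))`. -/
theorem kappa_cocycle {G H K I T : Type*} [Group G] [Group H] [Group K] [Group I] [Group T]
    [Finite G] [Finite H] [Finite K] [Finite I] [Finite T]
    (L : Subgroup (G × H × T)) (M : Subgroup (H × K × T)) (N : Subgroup (K × I × T)) :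
    Nat.card ↥(k2 L ⊓ k1 M) * Nat.card ↥(k2 (star3 L M) ⊓ k1 N) * Nat.card K =
      Nat.card ↥(k2 L ⊓ k1 (star3 M N)) * Nat.card ↥(k2 M ⊓ k1 N) * Nat.card K ∧
    Nonempty
      ((↥(k2 L ⊓ k1 (star3 M N)) ⧸ (k2 L ⊓ k1 M).subgroupOf (k2 L ⊓ k1 (star3 M N))) ≃
       (↥(k2 (star3 L M) ⊓ k1 N) ⧸ (k2 M ⊓ k1 N).subgroupOf (k2 (star3 L M) ⊓ k1 N))) :=
  kappa_cocycle_general L M N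
end

section
/- Two such subgroups are conjugate in G × G × T if and only if their data agree up to twist: D_{σ, α, T₀} is conjugate in G × G × T to D_{τ, β, T₁} if and only if there exist g ∈ G and t ∈ T such that T₀ = tT₁t⁻¹, σ = τ ∘ c_g (where c_g is conjugation x ↦ gxg⁻¹ on G), and α = β ∘ c_{t⁻¹} (i.e. α(t') = β(t⁻¹ t' t) for all t' ∈ T₀). -/
/-- The twisted diagonal subgroup `D_{σ, α, T₀} = {(α(t)σ(g), g, t) | g ∈ G, t ∈ T₀}`. -/
def twistedDiag {G T : Type*} [Group G] [Group T] (σ : G ≃* G) (T₀ : Subgroup T)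
    (α : T₀ →* Subgroup.center G) : Subgroup (G × G × T) where
  carrier := {x | ∃ (g : G) (t : T₀), x = (((α t : G) * σ g, g, (t : T)) : G × G × T)}
  one_mem' := ⟨1, 1, by simp; rfl⟩
  mul_mem' := by
    rintro x y ⟨g₁, t₁, rfl⟩ ⟨g₂, t₂, rfl⟩
    refine ⟨g₁ * g₂, t₁ * t₂, ?_⟩
    simp only [Prod.mk_mul_mk, map_mul, Subgroup.coe_mul, Prod.mk.injEq]
    exact ⟨(Commute.mul_mul_mul_comm
      (Subgroup.mem_center_iff.mp (α t₂).2 (σ g₁)) _ _), trivial⟩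
  inv_mem' := by
    rintro x ⟨g, t, rfl⟩
    refine ⟨g⁻¹, t⁻¹, ?_⟩
    simp only [Prod.inv_mk, map_inv, Subgroup.coe_inv, Prod.mk.injEq]
    refine ⟨?_, trivial⟩
    rw [mul_inv_rev]
    exact Commute.inv_inv (Subgroup.mem_center_iff.mp (α t).2 (σ g))

/-- Conjugate `a X a⁻¹` of a subgroup. -/
def conjSubgroup {A : Type*} [Group A] (a : A) (X : Subgroup A) : Subgroup A :=
  X.map (MulAut.conj a).toMonoidHom

/-! Conjugation by `(a₁, a₂, a₃)` carries `D_{τ, β, T₁}` to the twisted diagonal with data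
`(c_{a₁} ∘ τ ∘ c_{a₂}⁻¹, β ∘ c_{a₃}⁻¹, a₃T₁a₃⁻¹)`: the values of `β` are central, so `c_{a₁}` only
acts on the `τ`-part. A twisted diagonal determines its data (`T₀` is its image in `T`, and `σ`, `α`
are read off at `t = 1` and at `g = 1`), so conjugacy amounts to equality of these data, and
`c_{a₁} ∘ τ ∘ c_{a₂}⁻¹ = τ ∘ c_g` for `g = τ⁻¹(a₁) a₂⁻¹`. -/

lemma eq_comp_mulEquiv_symm_iff {A B M : Type*} [MulOneClass A] [MulOneClass B] [MulOneClass M]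
    (e : A ≃* B) (α : B →* M) (β : A →* M) :
    α = β.comp e.symm.toMonoidHom ↔ ∀ a, α (e a) = β a := by
  refine ⟨?_, fun h => MonoidHom.ext fun b => ?_⟩
  · rintro rfl a
    simp
  · simpa using h (e.symm b)

lemma inv_mul_mul_eq_mul_iff_of_mem_center {G : Type*} [Group G] {z : G}
    (hz : z ∈ Subgroup.center G) (a c y : G) :
    a⁻¹ * c * a = z * y ↔ c = z * (a * y * a⁻¹) := by
  have hconj : a * (z * y) * a⁻¹ = z * (a * y * a⁻¹) := by
    rw [← mul_assoc a, Subgroup.mem_center_iff.mp hz a]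
    simp only [mul_assoc]
  rw [← hconj]
  constructor
  · intro h
    rw [← h]
    group
  · rintro rfl
    group

section TwistedDiag

variable {G T : Type*} [Group G] [Group T]

lemma mem_twistedDiag_iff {σ : G ≃* G} {T₀ : Subgroup T} {α : T₀ →* Subgroup.center G}
    {x : G × G × T} :
    x ∈ twistedDiag σ T₀ α ↔ ∃ h : x.2.2 ∈ T₀, x.1 = α ⟨x.2.2, h⟩ * σ x.2.1 := by
  constructor
  · rintro ⟨g, t, rfl⟩
    exact ⟨t.2, rfl⟩
  · rintro ⟨h, hx⟩
    exact ⟨x.2.1, ⟨x.2.2, h⟩, Prod.ext hx rfl⟩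

lemma mk_mem_twistedDiag (σ : G ≃* G) (T₀ : Subgroup T) (α : T₀ →* Subgroup.center G)
    (g : G) (t : T₀) : ((α t : G) * σ g, g, (t : T)) ∈ twistedDiag σ T₀ α :=
  ⟨g, t, rfl⟩

lemma eq_of_mk_mem_twistedDiag {σ : G ≃* G} {T₀ : Subgroup T} {α : T₀ →* Subgroup.center G}
    {c g : G} {t : T₀} (h : (c, g, (t : T)) ∈ twistedDiag σ T₀ α) : c = α t * σ g :=
  (mem_twistedDiag_iff.mp h).2

lemma map_snd_snd_twistedDiag (σ : G ≃* G) (T₀ : Subgroup T) (α : T₀ →* Subgroup.center G) :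
    (twistedDiag σ T₀ α).map ((MonoidHom.snd G T).comp (MonoidHom.snd G (G × T))) = T₀ := by
  ext u
  simp only [Subgroup.mem_map, MonoidHom.coe_comp, MonoidHom.coe_snd, Function.comp_apply]
  constructor
  · rintro ⟨x, hx, rfl⟩
    exact (mem_twistedDiag_iff.mp hx).1
  · intro h
    exact ⟨(α ⟨u, h⟩ * σ 1, 1, u), mem_twistedDiag_iff.mpr ⟨h, rfl⟩, rfl⟩

lemma twistedDiag_inj {σ σ' : G ≃* G} {T₀ : Subgroup T} {α α' : T₀ →* Subgroup.center G} :
    twistedDiag σ T₀ α = twistedDiag σ' T₀ α' ↔ σ = σ' ∧ α = α' := by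
  refine ⟨fun h => ⟨?_, ?_⟩, fun ⟨hσ, hα⟩ => hσ ▸ hα ▸ rfl⟩
  · ext g
    have hg := eq_of_mk_mem_twistedDiag (h ▸ mk_mem_twistedDiag σ T₀ α g 1)
    simp only [map_one, OneMemClass.coe_one, one_mul] at hg
    exact hg
  · refine MonoidHom.ext fun t => Subtype.ext ?_
    have ht := eq_of_mk_mem_twistedDiag (h ▸ mk_mem_twistedDiag σ T₀ α 1 t)
    simp only [map_one, mul_one] at ht
    exact ht

lemma conjSubgroup_twistedDiag (σ : G ≃* G) (T₀ : Subgroup T) (α : T₀ →* Subgroup.center G)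
    (a : G × G × T) :
    conjSubgroup a (twistedDiag σ T₀ α) =
      twistedDiag (MulAut.conj a.1 * σ * (MulAut.conj a.2.1)⁻¹ : MulAut G) (conjSubgroup a.2.2 T₀)
        (α.comp ((MulAut.conj a.2.2).subgroupMap T₀).symm.toMonoidHom) := by
  obtain ⟨a₁, a₂, a₃⟩ := a
  ext ⟨c, g, u⟩
  rw [conjSubgroup, Subgroup.mem_map_equiv, mem_twistedDiag_iff, mem_twistedDiag_iff]
  simp only [conjSubgroup, Subgroup.mem_map_equiv]
  refine exists_congr fun h => ?_
  simp only [MulAut.conj_symm_apply, Prod.inv_mk, Prod.mk_mul_mk, MulEquiv.toMonoidHom_eq_coe,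
    MulAut.mul_apply, MulAut.inv_apply, MulAut.conj_apply]
  exact inv_mul_mul_eq_mul_iff_of_mem_center (α _).2 _ _ _

end TwistedDiag

/-- Two twisted diagonal subgroups `D_{σ, α, T₀}` and `D_{τ, β, T₁}` are conjugate in
`G × G × T` if and only if there exist `g ∈ G` and `t ∈ T` with `T₀ = tT₁t⁻¹`,
`σ = τ ∘ c_g` and `α = β ∘ c_{t⁻¹}`. -/
theorem twistedDiag_conj_iff {G T : Type*} [Group G] [Group T]
    (σ τ : G ≃* G) (T₀ T₁ : Subgroup T)
    (α : T₀ →* Subgroup.center G) (β : T₁ →* Subgroup.center G) :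
    (∃ a : G × G × T, conjSubgroup a (twistedDiag τ T₁ β) = twistedDiag σ T₀ α) ↔
    ∃ (g : G) (t : T) (hT : conjSubgroup t T₁ = T₀),
      (∀ x : G, σ x = τ (g * x * g⁻¹)) ∧
      ∀ s : T₁,
        (α ⟨t * (s : T) * t⁻¹,
            hT ▸ Subgroup.mem_map_of_mem (MulAut.conj t).toMonoidHom s.2⟩ : G) = (β s : G) := by
  constructor
  · rintro ⟨⟨a₁, a₂, a₃⟩, h⟩
    rw [conjSubgroup_twistedDiag] at h
    obtain rfl : conjSubgroup a₃ T₁ = T₀ := by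
      simpa only [map_snd_snd_twistedDiag] using
        congrArg (Subgroup.map ((MonoidHom.snd G T).comp (MonoidHom.snd G (G × T)))) h
    obtain ⟨rfl, hα⟩ := twistedDiag_inj.mp h
    refine ⟨τ.symm a₁ * a₂⁻¹, a₃, rfl, fun x => ?_, fun s => ?_⟩
    · simp only [MulAut.mul_apply, MulAut.inv_apply, MulAut.conj_apply, MulAut.conj_symm_apply,
        map_mul, map_inv, MulEquiv.apply_symm_apply]
      group
    · exact congrArg Subtype.val ((eq_comp_mulEquiv_symm_iff _ _ _).mp hα.symm s)
  · rintro ⟨g, t, rfl, hσ, hα⟩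
    refine ⟨(τ g, 1, t), ?_⟩
    rw [conjSubgroup_twistedDiag, twistedDiag_inj]
    refine ⟨MulEquiv.ext fun x => ?_, ?_⟩
    · simp [MulAut.mul_apply, hσ]
    · exact ((eq_comp_mulEquiv_symm_iff _ _ _).mpr fun s => Subtype.ext (hα s)).symm
end

section
/- Let D ≤ G × G × T be a subgroup with p₁(D) = G, k₁(D) = 1, p₂(D) = G, k₂(D) = 1 (projections and kernels with respect to the first two G-factors). Then there exist a subgroup A ≤ G × T with p₁(A) = G and a surjective group homomorphism f : A → G with ker(f) ∩ (k₁(A) × 1) = 1 such that D = {(f(g, t), g, t) | (g, t) ∈ A}. -/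
section
variable {A B C : Type*} [Group A] [Group B] [Group C]

/-- Projection of a subgroup of `A × B × C` to the first factor. -/
def p1 (D : Subgroup (A × B × C)) : Subgroup A := D.map (MonoidHom.fst A (B × C))

/-- Projection of a subgroup of `A × B × C` to the second factor. -/
def p2 (D : Subgroup (A × B × C)) : Subgroup B :=
  D.map ((MonoidHom.fst B C).comp (MonoidHom.snd A (B × C)))

end

/-! Since `k₁(D) = 1`, the projection `D → G × T` is injective, so `D` is the graph of the
homomorphism `f = p₁ ∘ (p₂₃|_D)⁻¹` on its image `A`. The image of `f` is `p₁(D) = G`, the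
projection of `A` to `G` is `p₂(D) = G`, and an element `(g, 1)` of `ker f` gives
`(1, g, 1) ∈ D`, so `g ∈ k₂(D) = 1`. -/

namespace Subgroup

variable {H I : Type*} [Group H] [Group I] (D : Subgroup (H × I))

lemma injective_snd_domRestrict (hD : ∀ h : H, ((h, 1) : H × I) ∈ D → h = 1) :
    Function.Injective ((MonoidHom.snd H I).domRestrict D) := by
  refine (injective_iff_map_eq_one _).2 fun d hd => ?_
  have hd2 : (d : H × I).2 = 1 := hd
  have hd1 : (d : H × I).1 = 1 := hD _ (by rw [← hd2]; exact d.2)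
  exact Subtype.ext (Prod.ext hd1 hd2)

variable {D}

noncomputable def graphHom (hD : ∀ h : H, ((h, 1) : H × I) ∈ D → h = 1) :
    ((MonoidHom.snd H I).domRestrict D).range →* H :=
  ((MonoidHom.fst H I).domRestrict D).comp
    (MonoidHom.ofInjective (D.injective_snd_domRestrict hD)).symm.toMonoidHom

variable (hD : ∀ h : H, ((h, 1) : H × I) ∈ D → h = 1)

lemma graphHom_mk_snd {x : H × I} (hx : x ∈ D) : graphHom hD ⟨x.2, ⟨x, hx⟩, rfl⟩ = x.1 := by
  have hx' : (⟨x.2, ⟨x, hx⟩, rfl⟩ : ((MonoidHom.snd H I).domRestrict D).range) =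
      MonoidHom.ofInjective (D.injective_snd_domRestrict hD) ⟨x, hx⟩ := rfl
  rw [hx']
  simp [graphHom]

lemma mk_graphHom_mem (a : ((MonoidHom.snd H I).domRestrict D).range) :
    (graphHom hD a, (a : I)) ∈ D := by
  obtain ⟨⟨x, hx⟩, hxa⟩ := a.2
  obtain rfl : (⟨x.2, ⟨x, hx⟩, rfl⟩ : ((MonoidHom.snd H I).domRestrict D).range) = a :=
    Subtype.ext hxa
  rw [graphHom_mk_snd hD hx]
  exact hx

lemma coe_eq_setOf_graphHom :
    (D : Set (H × I)) = {x | ∃ a, x = (graphHom hD a, (a : I))} := by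
  ext x
  constructor
  · exact fun hx => ⟨⟨x.2, ⟨x, hx⟩, rfl⟩, by rw [graphHom_mk_snd hD hx]⟩
  · rintro ⟨a, rfl⟩
    exact mk_graphHom_mem hD a

lemma range_graphHom : (graphHom hD).range = D.map (MonoidHom.fst H I) := by
  ext h
  constructor
  · rintro ⟨a, rfl⟩
    exact ⟨_, mk_graphHom_mem hD a, rfl⟩
  · rintro ⟨x, hx, rfl⟩
    exact ⟨_, graphHom_mk_snd hD hx⟩

end Subgroup

theorem essential_subgroup_form_general {G T : Type*} [Group G] [Group T]
    (D : Subgroup (G × G × T))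
    (hp1 : p1 D = ⊤) (hk1 : k1 D = ⊥) (hp2 : p2 D = ⊤) (hk2 : k2 D = ⊥) :
    ∃ (A : Subgroup (G × T)) (f : A →* G),
      A.map (MonoidHom.fst G T) = ⊤ ∧
      Function.Surjective f ∧
      (∀ a : A, f a = 1 → (a : G × T).2 = 1 → (a : G × T).1 = 1) ∧
      (D : Set (G × G × T)) =
        {x | ∃ a : A, x = ((f a, (a : G × T).1, (a : G × T).2) : G × G × T)} := by
  have hD : ∀ g : G, ((g, 1) : G × G × T) ∈ D → g = 1 := fun g hg =>
    Subgroup.mem_bot.1 (hk1 ▸ hg : g ∈ (⊥ : Subgroup G))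
  refine ⟨_, Subgroup.graphHom hD, ?_, ?_, ?_, Subgroup.coe_eq_setOf_graphHom hD⟩
  · rw [MonoidHom.domRestrict_range, Subgroup.map_map]
    exact hp2
  · rw [← MonoidHom.range_eq_top, Subgroup.range_graphHom]
    exact hp1
  · intro a hfa ha2
    have hmem := Subgroup.mk_graphHom_mem hD a
    rw [hfa, ← Prod.mk.eta (p := (a : G × T)), ha2] at hmem
    exact Subgroup.mem_bot.1 (hk2 ▸ hmem : (a : G × T).1 ∈ (⊥ : Subgroup G))

/-- A subgroup `D ≤ G × G × T` with `p₁(D) = G`, `k₁(D) = 1`, `p₂(D) = G`, `k₂(D) = 1`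
is the graph of a surjective homomorphism `f : A → G` defined on a subgroup `A ≤ G × T`
with `p₁(A) = G` and `ker f ∩ (k₁(A) × 1) = 1`. -/
theorem essential_subgroup_form {G T : Type*} [Group G] [Group T] [Finite G] [Finite T]
    (D : Subgroup (G × G × T))
    (hp1 : p1 D = ⊤) (hk1 : k1 D = ⊥) (hp2 : p2 D = ⊤) (hk2 : k2 D = ⊥) :
    ∃ (A : Subgroup (G × T)) (f : A →* G),
      A.map (MonoidHom.fst G T) = ⊤ ∧
      Function.Surjective f ∧
      (∀ a : A, f a = 1 → (a : G × T).2 = 1 → (a : G × T).1 = 1) ∧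
      (D : Set (G × G × T)) =
        {x | ∃ a : A, x = ((f a, (a : G × T).1, (a : G × T).2) : G × G × T)} :=
  essential_subgroup_form_general D hp1 hk1 hp2 hk2
end

section
/- Suppose gcd(|G|, |T|) = 1 and D ≤ G × G × T satisfies p₁(D) = G, k₁(D) = 1, p₂(D) = G, k₂(D) = 1. Then D = D_{σ, α, T₀} for some automorphism σ of G, some subgroup T₀ ≤ T, and some homomorphism α : T₀ → Z(G); that is, D = {(α(t)σ(g), g, t) | g ∈ G, t ∈ T₀}. (Key step: any subgroup A ≤ G × T with p₁(A) = G must equal G × T₀ for some T₀ ≤ T when gcd(|G|,|T|) = 1.) -/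
/-!
Raising to the power `|T| k` with `|T| k ≡ 1 (mod |G|)` fixes the `G × G`-coordinates of an element
of `(G × G) × T` and kills its `T`-coordinate, so with coprime orders `D = E × T₀` for subgroups
`E ≤ G × G` and `T₀ ≤ T`. The conditions on `p₁, k₁, p₂, k₂` say that `E` projects bijectively
onto both factors, so `E` is the graph of an automorphism of `G`, and `α` can be taken trivial.
-/

open Function

namespace Subgroup

variable {G H : Type*} [Group G] [Group H]

theorem fst_mem_goursatFst_of_coprime (hcop : (Nat.card G).Coprime (Nat.card H))
    {I : Subgroup (G × H)} {x : G × H} (hx : x ∈ I) : x.1 ∈ I.goursatFst := by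
  have key : (x ^ Nat.card H) ^ (Nat.card G).gcdB (Nat.card H) = (x.1, 1) := by
    ext
    · exact (powCoprime hcop).left_inv x.1
    · simp [pow_card_eq_one']
  rw [mem_goursatFst, ← key]
  exact zpow_mem (pow_mem hx _) _

theorem eq_goursatFst_prod_goursatSnd_of_coprime (hcop : (Nat.card G).Coprime (Nat.card H))
    (I : Subgroup (G × H)) : I = I.goursatFst.prod I.goursatSnd := by
  refine le_antisymm (fun x hx => ⟨fst_mem_goursatFst_of_coprime hcop hx, ?_⟩)
    (goursatFst_prod_goursatSnd_le I)
  have := mul_mem (inv_mem (mem_goursatFst.mp (fst_mem_goursatFst_of_coprime hcop hx))) hx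
  simpa [Prod.mul_def] using this

theorem injective_fst_comp_subtype_of_goursatSnd_eq_bot {I : Subgroup (G × H)}
    (h : I.goursatSnd = ⊥) : Injective (Prod.fst ∘ I.subtype) := by
  rintro ⟨x, hx⟩ ⟨y, hy⟩ hxy
  have : x.2⁻¹ * y.2 ∈ I.goursatSnd := by
    simpa [Prod.mul_def, show x.1 = y.1 from hxy] using mul_mem (inv_mem hx) hy
  rw [h, mem_bot, inv_mul_eq_one] at this
  exact Subtype.ext (Prod.ext hxy this)

theorem injective_snd_comp_subtype_of_goursatFst_eq_bot {I : Subgroup (G × H)}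
    (h : I.goursatFst = ⊥) : Injective (Prod.snd ∘ I.subtype) := by
  rintro ⟨x, hx⟩ ⟨y, hy⟩ hxy
  have : x.1⁻¹ * y.1 ∈ I.goursatFst := by
    simpa [Prod.mul_def, show x.2 = y.2 from hxy] using mul_mem (inv_mem hx) hy
  rw [h, mem_bot, inv_mul_eq_one] at this
  exact Subtype.ext (Prod.ext this hxy)

theorem exists_mulEquiv_eq_graph_of_goursat_eq_bot {I : Subgroup (G × H)}
    (hI₁ : Surjective (Prod.fst ∘ I.subtype)) (hI₂ : Surjective (Prod.snd ∘ I.subtype))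
    (hFst : I.goursatFst = ⊥) (hSnd : I.goursatSnd = ⊥) :
    ∃ e : G ≃* H, I = e.toMonoidHom.graph :=
  exists_mulEquiv_eq_graph ⟨injective_fst_comp_subtype_of_goursatSnd_eq_bot hSnd, hI₁⟩
    ⟨injective_snd_comp_subtype_of_goursatFst_eq_bot hFst, hI₂⟩

end Subgroup

theorem mem_twistedDiag_one {G T : Type*} [Group G] [Group T] {σ : G ≃* G} {T₀ : Subgroup T}
    {x : G × G × T} : x ∈ twistedDiag σ T₀ 1 ↔ x.1 = σ x.2.1 ∧ x.2.2 ∈ T₀ := by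
  constructor
  · rintro ⟨g, t, rfl⟩
    simp
  · rintro ⟨h₁, h₂⟩
    refine ⟨x.2.1, ⟨x.2.2, h₂⟩, ?_⟩
    simp [← h₁]

theorem essential_subgroup_coprime_general {G T : Type*} [Group G] [Group T]
    (hcop : (Nat.card G).Coprime (Nat.card T))
    (D : Subgroup (G × G × T))
    (hp1 : p1 D = ⊤) (hk1 : k1 D = ⊥) (hp2 : p2 D = ⊤) (hk2 : k2 D = ⊥) :
    ∃ (σ : G ≃* G) (T₀ : Subgroup T) (α : T₀ →* Subgroup.center G),
      D = twistedDiag σ T₀ α := by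
  set D' := D.comap (MulEquiv.prodAssoc : (G × G) × T ≃* G × G × T).toMonoidHom
  set E := D'.goursatFst
  have hD : ∀ a b t, ((a, b, t) : G × G × T) ∈ D ↔ (a, b) ∈ E ∧ t ∈ D'.goursatSnd :=
    fun a b t => SetLike.ext_iff.mp (D'.eq_goursatFst_prod_goursatSnd_of_coprime
      (by rw [Nat.card_prod]; exact hcop.mul_left hcop)) ((a, b), t)
  obtain ⟨e, he⟩ : ∃ e : G ≃* G, E = e.toMonoidHom.graph := by
    refine E.exists_mulEquiv_eq_graph_of_goursat_eq_bot ?_ ?_ ?_ ?_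
    · intro a
      obtain ⟨⟨a, b, t⟩, hx, rfl⟩ := hp1 ▸ Subgroup.mem_top a
      exact ⟨⟨(a, b), ((hD a b t).mp hx).1⟩, rfl⟩
    · intro b
      obtain ⟨⟨a, b, t⟩, hx, rfl⟩ := hp2 ▸ Subgroup.mem_top b
      exact ⟨⟨(a, b), ((hD a b t).mp hx).1⟩, rfl⟩
    · rw [← hk1]; ext a; simp [E, D', k1]
    · rw [← hk2]; ext b; simp [E, D', k2]
  refine ⟨e.symm, D'.goursatSnd, 1, ?_⟩
  ext ⟨a, b, t⟩
  rw [hD, he, mem_twistedDiag_one, MonoidHom.mem_graph, MulEquiv.eq_symm_apply]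
  rfl

/-- If `(|G|, |T|) = 1` and `D ≤ G × G × T` has `p₁(D) = G`, `k₁(D) = 1`, `p₂(D) = G`,
`k₂(D) = 1`, then `D = D_{σ, α, T₀}` for some automorphism `σ` of `G`, some `T₀ ≤ T`
and some homomorphism `α : T₀ → Z(G)`. -/
theorem essential_subgroup_coprime {G T : Type*} [Group G] [Group T] [Finite G] [Finite T]
    (hcop : (Nat.card G).Coprime (Nat.card T))
    (D : Subgroup (G × G × T))
    (hp1 : p1 D = ⊤) (hk1 : k1 D = ⊥) (hp2 : p2 D = ⊤) (hk2 : k2 D = ⊥) :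
    ∃ (σ : G ≃* G) (T₀ : Subgroup T) (α : T₀ →* Subgroup.center G),
      D = twistedDiag σ T₀ α :=
  essential_subgroup_coprime_general hcop D hp1 hk1 hp2 hk2
end
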